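/- There exists a constant c₀ > 0, depending only on d, such that uniformly for all balls ℬ = ℬ(z̄, e, r, r*), the pair of sets (π(ℬ), π*(ℬ)) satisfies 𝒯(π(ℬ), π*(ℬ)) ≥ c₀ |π(ℬ)|^{d/(d+1)} |π*(ℬ)|^{d/(d+1)}; that is, (π(ℬ), π*(ℬ)) is c₀-quasiextremal for the restricted weak type inequality for T. -/

import Mathlib

/-! Write `n = d - 1` and measure boxes in the frame `e`. The projection `π(ℬ)` lies in the slab
`{x : x' ∈ Q, |x_d - x̄*_d - |x' - x̄*'|²| < ρ}` over the box `Q` of half-sides `r_j` about `x̄'`, and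
symmetrically for `π*(ℬ)`, so `|π(ℬ)| |π*(ℬ)| ≤ 4ρ² ∏ (4 r_j r*_j) = 4^d ρ^(d+1)`.
Conversely, for `x` in the half-height slab `E'` over `Q` and `t` in the box of half-sides
`r*_j / (8n)` about `x' - x̄*'`, the point `(x' - t, x_d - |t|²)` lies in `π*(ℬ)`: the last defining
inequality of `ℬ` differs from the third only by the cross term `2⟪x' - x̄', t - (x' - x̄*')⟫`,
which is at most `2 ∑ r_j r*_j / (8n) = ρ/4`. Hence `𝒯(π(ℬ), π*(ℬ)) ≥ |E'| ∏ (r*_j / (4n)) =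
ρ (ρ / 2n)^n`, which is `ρ^d = (ρ^(d+1))^(d/(d+1))` up to a constant depending on `d`. -/

open MeasureTheory ENNReal
open scoped RealInnerProductSpace

noncomputable section

/-- `ℝ^{d-1}` -/
abbrev Vec (n : ℕ) : Type := EuclideanSpace ℝ (Fin n)

/-- `ℝ^d = ℝ^{d-1} × ℝ`, a point `x = (x', x_d)` -/
abbrev Pt (n : ℕ) : Type := Vec n × ℝ

/-- The Radon-like transform `Tf(x) = ∫_{ℝ^{d-1}} f(x' - t, x_d - |t|²) dt`. -/
def radonT (n : ℕ) (f : Pt n → ℝ≥0∞) (x : Pt n) : ℝ≥0∞ :=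
  ∫⁻ t : Vec n, f (x.1 - t, x.2 - ‖t‖ ^ 2)

/-- The incidence functional `𝒯(E, E*) = ∫_E T(χ_{E*})`. -/
def incT (n : ℕ) (E Estar : Set (Pt n)) : ℝ≥0∞ :=
  ∫⁻ x in E, radonT n (Estar.indicator 1) x

/-- Admissibility of the parameters of a ball `ℬ(z̄, e, r, r*)`:
the center `z̄ = (x̄, x̄*)` lies on the incidence manifold `ℐ`, `ρ > 0`,
`e` is an orthonormal basis of `ℝ^{d-1}`, and `r_j r*_j = ρ > 0` for all `j`. -/
def IsBallParams (n : ℕ) (zb : Pt n × Pt n) (e : Fin n → Vec n)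
    (r rs : Fin n → ℝ) (ρ : ℝ) : Prop :=
  zb.2.2 = zb.1.2 - ‖zb.2.1 - zb.1.1‖ ^ 2 ∧ 0 < ρ ∧ Orthonormal ℝ e ∧
    (∀ j, 0 < r j) ∧ (∀ j, 0 < rs j) ∧ (∀ j, r j * rs j = ρ)

/-- The ball `ℬ(z̄, e, r, r*)`, a subset of the incidence manifold
`ℐ = {(x,y) : y_d = x_d - |y' - x'|²} ⊆ ℝ^d × ℝ^d`. -/
def ballI (n : ℕ) (zb : Pt n × Pt n) (e : Fin n → Vec n)
    (r rs : Fin n → ℝ) (ρ : ℝ) : Set (Pt n × Pt n) :=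
  fun z => z.2.2 = z.1.2 - ‖z.2.1 - z.1.1‖ ^ 2 ∧
    (∀ j, |⟪z.1.1 - zb.1.1, e j⟫| < r j) ∧
    |z.1.2 - zb.2.2 - ‖z.1.1 - zb.2.1‖ ^ 2| < ρ ∧
    (∀ j, |⟪z.2.1 - zb.2.1, e j⟫| < rs j) ∧
    |z.2.2 - zb.1.2 + ‖z.2.1 - zb.1.1‖ ^ 2| < ρ

theorem norm_sub_sq_sub_norm_sq {F : Type*} [NormedAddCommGroup F] [InnerProductSpace ℝ F]
    (u v t : F) : ‖u - t‖ ^ 2 - ‖t‖ ^ 2 = ‖u - v‖ ^ 2 - ‖v‖ ^ 2 - 2 * ⟪u, t - v⟫ := by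
  rw [norm_sub_sq_real, norm_sub_sq_real, inner_sub_right]
  ring

section OrthoBox

variable {ι F : Type*} [NormedAddCommGroup F] [InnerProductSpace ℝ F]

def orthoBox (e : ι → F) (c : F) (w : ι → ℝ) : Set F :=
  {y | ∀ j, |⟪y - c, e j⟫| < w j}

theorem isOpen_orthoBox [Finite ι] (e : ι → F) (c : F) (w : ι → ℝ) :
    IsOpen (orthoBox e c w) := by
  simp only [orthoBox, Set.ofPred_forall]
  exact isOpen_iInter_of_finite fun j => isOpen_lt (by fun_prop) continuous_const

theorem Orthonormal.exists_orthonormalBasis_coe_eq [Fintype ι] [FiniteDimensional ℝ F]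
    {e : ι → F} (he : Orthonormal ℝ e) (hcard : Fintype.card ι = Module.finrank ℝ F) :
    ∃ b : OrthonormalBasis ι ℝ F, ⇑b = e :=
  ⟨.mk he (he.linearIndependent.span_eq_top_of_card_eq_finrank' hcard).ge, by simp⟩

variable [Fintype ι]

theorem OrthonormalBasis.abs_inner_le_sum (b : OrthonormalBasis ι ℝ F) {u v : F}
    {a a' : ι → ℝ} (hu : ∀ j, |⟪u, b j⟫| ≤ a j) (hv : ∀ j, |⟪v, b j⟫| ≤ a' j) :
    |⟪u, v⟫| ≤ ∑ j, a j * a' j := by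
  rw [← b.sum_inner_mul_inner u v]
  refine (Finset.abs_sum_le_sum_abs _ _).trans (Finset.sum_le_sum fun j _ => ?_)
  rw [abs_mul, real_inner_comm v (b j)]
  exact mul_le_mul (hu j) (hv j) (abs_nonneg _) ((abs_nonneg _).trans (hu j))

theorem OrthonormalBasis.volume_orthoBox [MeasurableSpace F] [BorelSpace F]
    [FiniteDimensional ℝ F] (b : OrthonormalBasis ι ℝ F) (c : F) (w : ι → ℝ) :
    volume (orthoBox b c w) = ∏ j, ENNReal.ofReal (2 * w j) := by
  have hbox : orthoBox b c w = b.repr ⁻¹' (WithLp.ofLp ⁻¹'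
      Set.univ.pi fun j => Set.Ioo (b.repr c j - w j) (b.repr c j + w j)) := by
    ext y
    simp only [orthoBox, Set.mem_ofPred_eq, Set.mem_preimage, Set.mem_univ_pi, Set.mem_Ioo,
      ← b.repr_apply_apply, real_inner_comm (b _), map_sub, WithLp.ofLp_sub, Pi.sub_apply, abs_lt]
    exact forall_congr' fun j => by constructor <;> intro h <;> constructor <;> linarith [h.1, h.2]
  have hpi : MeasurableSet
      (Set.univ.pi fun j => Set.Ioo (b.repr c j - w j) (b.repr c j + w j)) :=
    .univ_pi fun _ => measurableSet_Ioo
  rw [hbox, b.measurePreserving_repr.measure_preimage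
      (hpi.preimage (by fun_prop)).nullMeasurableSet,
    (PiLp.volume_preserving_ofLp ι).measure_preimage hpi.nullMeasurableSet, volume_pi_pi]
  congr! with j
  rw [Real.volume_Ioo]
  ring_nf

end OrthoBox

section GraphSlab

variable {V : Type*} [MeasureSpace V]

def graphSlab (B : Set V) (g : V → ℝ) (s : ℝ) : Set (V × ℝ) :=
  {x | x.1 ∈ B ∧ |x.2 - g x.1| < s}

theorem measurableSet_graphSlab {B : Set V} (hB : MeasurableSet B) {g : V → ℝ}
    (hg : Measurable g) (s : ℝ) : MeasurableSet (graphSlab B g s) :=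
  (measurable_fst hB).inter <|
    measurableSet_lt (measurable_snd.sub (hg.comp measurable_fst)).abs measurable_const

theorem volume_graphSlab [SFinite (volume : Measure V)] {B : Set V} (hB : MeasurableSet B)
    {g : V → ℝ} (hg : Measurable g) (s : ℝ) :
    volume (graphSlab B g s) = ENNReal.ofReal (2 * s) * volume B := by
  rw [Measure.volume_eq_prod, Measure.prod_apply (measurableSet_graphSlab hB hg s),
    ← lintegral_indicator_const hB]
  congr! with y
  by_cases hy : y ∈ B
  · have hfiber : Prod.mk y ⁻¹' graphSlab B g s = Set.Ioo (g y - s) (g y + s) := by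
      ext z
      simp [graphSlab, hy, abs_lt, sub_lt_iff_lt_add', and_comm]
    rw [hfiber, Real.volume_Ioo, Set.indicator_of_mem hy]
    ring_nf
  · have hfiber : Prod.mk y ⁻¹' graphSlab B g s = ∅ := by
      ext z
      simp [graphSlab, hy]
    rw [hfiber, Set.indicator_of_notMem hy, measure_empty]

end GraphSlab

theorem OrthonormalBasis.volume_graphSlab_orthoBox {ι F : Type*} [Fintype ι]
    [NormedAddCommGroup F] [InnerProductSpace ℝ F] [FiniteDimensional ℝ F] [MeasurableSpace F]
    [BorelSpace F] (b : OrthonormalBasis ι ℝ F) (c : F) {w : ι → ℝ} (hw : ∀ j, 0 ≤ w j)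
    {g : F → ℝ} (hg : Measurable g) {s : ℝ} (hs : 0 ≤ s) :
    volume (graphSlab (orthoBox b c w) g s) = ENNReal.ofReal (2 * s * ∏ j, 2 * w j) := by
  rw [volume_graphSlab (isOpen_orthoBox _ _ _).measurableSet hg, b.volume_orthoBox,
    ← ENNReal.ofReal_prod_of_nonneg fun j _ => mul_nonneg zero_le_two (hw j),
    ← ENNReal.ofReal_mul (by linarith)]

theorem volume_le_radonT_indicator {n : ℕ} {E : Set (Pt n)} {S : Set (Vec n)} {x : Pt n}
    (hS : MeasurableSet S) (hSE : ∀ t ∈ S, (x.1 - t, x.2 - ‖t‖ ^ 2) ∈ E) :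
    volume S ≤ radonT n (E.indicator 1) x := by
  rw [← lintegral_indicator_one hS]
  refine lintegral_mono fun t => ?_
  by_cases ht : t ∈ S
  · simp [ht, hSE t ht]
  · simp [ht]

theorem mul_volume_le_incT {n : ℕ} {E Estar A : Set (Pt n)} {c : ℝ≥0∞} (hA : MeasurableSet A)
    (hAE : A ⊆ E) (hc : ∀ x ∈ A, c ≤ radonT n (Estar.indicator 1) x) :
    c * volume A ≤ incT n E Estar :=
  calc c * volume A = ∫⁻ _ in A, c := (setLIntegral_const A c).symm
    _ ≤ ∫⁻ x in A, radonT n (Estar.indicator 1) x := setLIntegral_mono' hA hc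
    _ ≤ incT n E Estar := lintegral_mono_set hAE

section Ball

variable {n : ℕ} {zb : Pt n × Pt n} {e : Fin n → Vec n} {r rs : Fin n → ℝ} {ρ : ℝ}

theorem fst_image_ballI_subset :
    Prod.fst '' ballI n zb e r rs ρ ⊆
      graphSlab (orthoBox e zb.1.1 r) (fun y => zb.2.2 + ‖y - zb.2.1‖ ^ 2) ρ := by
  rintro _ ⟨z, ⟨-, hx', hxd, -, -⟩, rfl⟩
  exact ⟨hx', by rwa [← sub_sub]⟩

theorem snd_image_ballI_subset :
    Prod.snd '' ballI n zb e r rs ρ ⊆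
      graphSlab (orthoBox e zb.2.1 rs) (fun y => zb.1.2 - ‖y - zb.1.1‖ ^ 2) ρ := by
  rintro _ ⟨z, ⟨-, -, -, hy', hyd⟩, rfl⟩
  exact ⟨hy', by rwa [sub_sub_eq_add_sub, add_sub_right_comm]⟩

theorem mk_mem_ballI [NeZero n] (b : OrthonormalBasis (Fin n) ℝ (Vec n))
    (hz : zb.2.2 = zb.1.2 - ‖zb.2.1 - zb.1.1‖ ^ 2) (hrs : ∀ j, 0 < rs j)
    (hrrs : ∀ j, r j * rs j = ρ) {x : Pt n}
    (hx : x ∈ graphSlab (orthoBox b zb.1.1 r) (fun y => zb.2.2 + ‖y - zb.2.1‖ ^ 2) (ρ / 2))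
    {t : Vec n} (ht : t ∈ orthoBox b (x.1 - zb.2.1) fun j => rs j / (8 * n)) :
    (x, (x.1 - t, x.2 - ‖t‖ ^ 2)) ∈ ballI n zb b r rs ρ := by
  obtain ⟨hx', hxd⟩ := hx
  simp only at hxd
  have hn : (1 : ℝ) ≤ n := by exact_mod_cast Nat.one_le_iff_ne_zero.mpr (NeZero.ne n)
  have hcross : |⟪x.1 - zb.1.1, t - (x.1 - zb.2.1)⟫| ≤ ρ / 8 := calc
    _ ≤ ∑ j, r j * (rs j / (8 * n)) :=
      b.abs_inner_le_sum (fun j => (hx' j).le) (fun j => (ht j).le)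
    _ = ρ / 8 := by
      simp_rw [mul_div_assoc', hrrs]
      simp only [Finset.sum_const, Finset.card_univ, Fintype.card_fin, nsmul_eq_mul]
      field_simp
  have hxd' : |x.2 - zb.2.2 - ‖x.1 - zb.2.1‖ ^ 2| < ρ := by
    rw [sub_sub]
    linarith [abs_nonneg (x.2 - (zb.2.2 + ‖x.1 - zb.2.1‖ ^ 2))]
  refine ⟨by simp, hx', hxd', fun j => ?_, ?_⟩
  · rw [show x.1 - t - zb.2.1 = -(t - (x.1 - zb.2.1)) by abel, inner_neg_left, abs_neg]
    exact (ht j).trans_le (div_le_self (hrs j).le (by linarith))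
  · have hid := norm_sub_sq_sub_norm_sq (x.1 - zb.1.1) (x.1 - zb.2.1) t
    rw [show x.1 - zb.1.1 - (x.1 - zb.2.1) = zb.2.1 - zb.1.1 by abel] at hid
    rw [show x.1 - t - zb.1.1 = x.1 - zb.1.1 - t by abel]
    rw [abs_lt] at hxd ⊢
    rw [abs_le] at hcross
    constructor <;> linarith [hcross.1, hcross.2, hxd.1, hxd.2]

theorem volume_fst_image_ballI_le (b : OrthonormalBasis (Fin n) ℝ (Vec n)) (hr : ∀ j, 0 ≤ r j)
    (hρ : 0 ≤ ρ) :
    volume (Prod.fst '' ballI n zb b r rs ρ) ≤ ENNReal.ofReal (2 * ρ * ∏ j, 2 * r j) :=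
  (measure_mono fst_image_ballI_subset).trans_eq
    (b.volume_graphSlab_orthoBox _ hr (by fun_prop) hρ)

theorem volume_snd_image_ballI_le (b : OrthonormalBasis (Fin n) ℝ (Vec n)) (hrs : ∀ j, 0 ≤ rs j)
    (hρ : 0 ≤ ρ) :
    volume (Prod.snd '' ballI n zb b r rs ρ) ≤ ENNReal.ofReal (2 * ρ * ∏ j, 2 * rs j) :=
  (measure_mono snd_image_ballI_subset).trans_eq
    (b.volume_graphSlab_orthoBox _ hrs (by fun_prop) hρ)

theorem ofReal_mul_le_incT_ballI [NeZero n] (b : OrthonormalBasis (Fin n) ℝ (Vec n))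
    (hz : zb.2.2 = zb.1.2 - ‖zb.2.1 - zb.1.1‖ ^ 2) (hρ : 0 < ρ) (hr : ∀ j, 0 < r j)
    (hrs : ∀ j, 0 < rs j) (hrrs : ∀ j, r j * rs j = ρ) :
    ENNReal.ofReal (∏ j, 2 * (rs j / (8 * n))) * ENNReal.ofReal (ρ * ∏ j, 2 * r j) ≤
      incT n (Prod.fst '' ballI n zb b r rs ρ) (Prod.snd '' ballI n zb b r rs ρ) := by
  have hn : (0 : ℝ) < n := by exact_mod_cast Nat.pos_of_neZero n
  have hw : ∀ j, 0 ≤ rs j / (8 * n) := fun j => div_nonneg (hrs j).le (by positivity)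
  have hbox (x : Pt n) : volume (orthoBox b (x.1 - zb.2.1) fun j => rs j / (8 * n)) =
      ENNReal.ofReal (∏ j, 2 * (rs j / (8 * n))) := by
    rw [b.volume_orthoBox, ENNReal.ofReal_prod_of_nonneg fun j _ => mul_nonneg zero_le_two (hw j)]
  have hslab : volume (graphSlab (orthoBox b zb.1.1 r) (fun y => zb.2.2 + ‖y - zb.2.1‖ ^ 2)
      (ρ / 2)) = ENNReal.ofReal (ρ * ∏ j, 2 * r j) := by
    rw [b.volume_graphSlab_orthoBox _ (fun j => (hr j).le) (by fun_prop) (by positivity)]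
    ring_nf
  rw [← hslab]
  refine mul_volume_le_incT
    (measurableSet_graphSlab (isOpen_orthoBox _ _ _).measurableSet (by fun_prop) _)
    (fun x hx => ⟨_, mk_mem_ballI b hz hrs hrrs hx (t := x.1 - zb.2.1) fun j => ?_, rfl⟩)
    fun x hx => ?_
  · rw [sub_self, inner_zero_left, abs_zero]
    exact div_pos (hrs j) (by positivity)
  · rw [← hbox x]
    exact volume_le_radonT_indicator (isOpen_orthoBox _ _ _).measurableSet
      fun t ht => ⟨_, mk_mem_ballI b hz hrs hrrs hx ht, rfl⟩

end Ball

def quasiextremalConst (n : ℕ) : ℝ := 1 / (4 ^ (n + 1) * (2 * n) ^ n)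

theorem quasiextremalConst_pos (n : ℕ) [NeZero n] : 0 < quasiextremalConst n := by
  have : (0 : ℝ) < n := by exact_mod_cast Nat.pos_of_neZero n
  unfold quasiextremalConst
  positivity

theorem quasiextremalConst_mul_le {n : ℕ} {ρ : ℝ} {r rs : Fin n → ℝ} (hρ : 0 < ρ)
    (hr : ∀ j, 0 < r j) (hrs : ∀ j, 0 < rs j) (hrrs : ∀ j, r j * rs j = ρ) :
    quasiextremalConst n * (2 * ρ * ∏ j, 2 * r j) ^ (((n : ℝ) + 1) / (n + 2)) *
        (2 * ρ * ∏ j, 2 * rs j) ^ (((n : ℝ) + 1) / (n + 2)) ≤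
      (∏ j, 2 * (rs j / (8 * n))) * (ρ * ∏ j, 2 * r j) := by
  set p : ℝ := ((n : ℝ) + 1) / (n + 2)
  have hc : 0 ≤ quasiextremalConst n := by unfold quasiextremalConst; positivity
  have hP : 0 < ∏ j, 2 * r j := Finset.prod_pos fun j _ => by linarith [hr j]
  have hQ : 0 < ∏ j, 2 * rs j := Finset.prod_pos fun j _ => by linarith [hrs j]
  have hPQ : (∏ j, 2 * r j) * ∏ j, 2 * rs j = (4 * ρ) ^ n := by
    rw [← Finset.prod_mul_distrib, Finset.prod_congr rfl fun j _ => show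
      2 * r j * (2 * rs j) = 4 * ρ by rw [← hrrs j]; ring]
    simp
  have hKP : (∏ j, 2 * (rs j / (8 * n))) * ∏ j, 2 * r j = (ρ / (2 * n)) ^ n := by
    rw [← Finset.prod_mul_distrib, Finset.prod_congr rfl fun j _ => show
      2 * (rs j / (8 * n)) * (2 * r j) = ρ / (2 * n) by rw [← hrrs j]; ring]
    simp [div_pow]
  have hpow : (4 ^ (n + 1) : ℝ) ^ p ≤ 4 ^ (n + 1) := by
    refine (Real.rpow_le_rpow_of_exponent_le (one_le_pow₀ (by norm_num)) ?_).trans_eq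
      (Real.rpow_one _)
    rw [div_le_one (by positivity)]
    linarith
  have hρpow : (ρ ^ (n + 2)) ^ p = ρ ^ (n + 1) := by
    rw [← Real.rpow_natCast, ← Real.rpow_mul hρ.le, ← Real.rpow_natCast]
    congr 1
    push_cast
    exact mul_div_cancel₀ _ (by positivity)
  calc quasiextremalConst n * (2 * ρ * ∏ j, 2 * r j) ^ p * (2 * ρ * ∏ j, 2 * rs j) ^ p
      = quasiextremalConst n * ((4 ^ (n + 1) : ℝ) ^ p * ρ ^ (n + 1)) := by
        rw [mul_assoc, ← Real.mul_rpow (by positivity) (by positivity),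
          show 2 * ρ * (∏ j, 2 * r j) * (2 * ρ * ∏ j, 2 * rs j) = 4 ^ (n + 1) * ρ ^ (n + 2) by
            rw [mul_mul_mul_comm, hPQ]; ring,
          Real.mul_rpow (by positivity) (by positivity), hρpow]
    _ ≤ quasiextremalConst n * (4 ^ (n + 1) * ρ ^ (n + 1)) := by
        gcongr
    _ = (∏ j, 2 * (rs j / (8 * n))) * (ρ * ∏ j, 2 * r j) := by
        rw [mul_left_comm _ ρ, hKP, quasiextremalConst, div_pow]
        field_simp
        ring

theorem quasiextremal_ballI {n : ℕ} [NeZero n] {zb : Pt n × Pt n} {e : Fin n → Vec n}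
    {r rs : Fin n → ℝ} {ρ : ℝ} (h : IsBallParams n zb e r rs ρ) :
    ENNReal.ofReal (quasiextremalConst n) *
        volume (Prod.fst '' ballI n zb e r rs ρ) ^ (((n : ℝ) + 1) / (n + 2)) *
        volume (Prod.snd '' ballI n zb e r rs ρ) ^ (((n : ℝ) + 1) / (n + 2)) ≤
      incT n (Prod.fst '' ballI n zb e r rs ρ) (Prod.snd '' ballI n zb e r rs ρ) := by
  obtain ⟨hz, hρ, he, hr, hrs, hrrs⟩ := h
  obtain ⟨b, rfl⟩ := he.exists_orthonormalBasis_coe_eq (by simp)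
  set p : ℝ := ((n : ℝ) + 1) / (n + 2)
  have hp : 0 ≤ p := by positivity
  have hc := (quasiextremalConst_pos n).le
  have hP : 0 ≤ 2 * ρ * ∏ j, 2 * r j :=
    mul_nonneg (by positivity) (Finset.prod_nonneg fun j _ => by linarith [hr j])
  have hQ : 0 ≤ 2 * ρ * ∏ j, 2 * rs j :=
    mul_nonneg (by positivity) (Finset.prod_nonneg fun j _ => by linarith [hrs j])
  have hK : 0 ≤ ∏ j, 2 * (rs j / (8 * n)) :=
    Finset.prod_nonneg fun j _ => mul_nonneg zero_le_two (div_nonneg (hrs j).le (by positivity))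
  calc _ ≤ ENNReal.ofReal (quasiextremalConst n) * ENNReal.ofReal (2 * ρ * ∏ j, 2 * r j) ^ p *
          ENNReal.ofReal (2 * ρ * ∏ j, 2 * rs j) ^ p := by
        gcongr
        exacts [volume_fst_image_ballI_le b (fun j => (hr j).le) hρ.le,
          volume_snd_image_ballI_le b (fun j => (hrs j).le) hρ.le]
    _ = ENNReal.ofReal (quasiextremalConst n * (2 * ρ * ∏ j, 2 * r j) ^ p *
          (2 * ρ * ∏ j, 2 * rs j) ^ p) := by
        rw [ENNReal.ofReal_rpow_of_nonneg hP hp, ENNReal.ofReal_rpow_of_nonneg hQ hp,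
          ← ENNReal.ofReal_mul hc, ← ENNReal.ofReal_mul (by positivity)]
    _ ≤ ENNReal.ofReal ((∏ j, 2 * (rs j / (8 * n))) * (ρ * ∏ j, 2 * r j)) :=
        ENNReal.ofReal_le_ofReal (quasiextremalConst_mul_le hρ hr hrs hrrs)
    _ ≤ _ := by
        rw [ENNReal.ofReal_mul hK]
        exact ofReal_mul_le_incT_ballI b hz hρ hr hrs hrrs

/-- every pair `(π(ℬ), π*(ℬ))` is `c₀`-quasiextremal,
uniformly over all balls `ℬ`. -/
theorem stmt2 (d : ℕ) (hd : 2 ≤ d) :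
    ∃ c₀ : ℝ, 0 < c₀ ∧
      ∀ (zb : Pt (d - 1) × Pt (d - 1)) (e : Fin (d - 1) → Vec (d - 1))
        (r rs : Fin (d - 1) → ℝ) (ρ : ℝ), IsBallParams (d - 1) zb e r rs ρ →
        ENNReal.ofReal c₀ *
            volume (Prod.fst '' ballI (d - 1) zb e r rs ρ) ^ ((d : ℝ) / (d + 1)) *
            volume (Prod.snd '' ballI (d - 1) zb e r rs ρ) ^ ((d : ℝ) / (d + 1)) ≤
          incT (d - 1) (Prod.fst '' ballI (d - 1) zb e r rs ρ)
            (Prod.snd '' ballI (d - 1) zb e r rs ρ) := by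
  obtain ⟨n, rfl⟩ : ∃ n, d = n + 1 := ⟨d - 1, by omega⟩
  have : NeZero n := ⟨by omega⟩
  have hexp : ((n + 1 : ℕ) : ℝ) / ((n + 1 : ℕ) + 1) = ((n : ℝ) + 1) / (n + 2) := by
    push_cast
    ring
  simp only [hexp]
  exact ⟨quasiextremalConst n, quasiextremalConst_pos n, fun _ _ _ _ _ h => quasiextremal_ballI h⟩
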